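/- Fix t₀. There exists ε > 0 such that for every t with 0 < |t − t₀| < ε, the osculating circle of ξ at t₀, namely the set {P ∈ ℝ³ : (P − ξ(t₀))·b(t₀) = 0 and ‖P − (ξ(t₀) + r(t₀)n(t₀))‖ = r(t₀)}, is disjoint from the osculating plane of ξ at t, namely the set {P ∈ ℝ³ : (P − ξ(t))·b(t) = 0}. In particular, the osculating circles of ξ at sufficiently close points are not linked. -/

import Mathlib

open scoped RealInnerProductSpace

noncomputable section

/-- The determinant of the 3×3 matrix with rows `u`, `v`, `w`. -/
def det3 (u v w : EuclideanSpace ℝ (Fin 3)) : ℝ :=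
  u 0 * (v 1 * w 2 - v 2 * w 1) - u 1 * (v 0 * w 2 - v 2 * w 0)
    + u 2 * (v 0 * w 1 - v 1 * w 0)

/-- The cross product of two vectors in `ℝ³`. -/
def cross3 (u v : EuclideanSpace ℝ (Fin 3)) : EuclideanSpace ℝ (Fin 3) :=
  (WithLp.equiv 2 (Fin 3 → ℝ)).symm
    ![u 1 * v 2 - u 2 * v 1, u 2 * v 0 - u 0 * v 2, u 0 * v 1 - u 1 * v 0]

abbrev E3 := EuclideanSpace ℝ (Fin 3)

lemma inner3 (x y : E3) : ⟪x, y⟫ = x 0 * y 0 + x 1 * y 1 + x 2 * y 2 := by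
  simp [PiLp.inner_apply, Fin.sum_univ_three, mul_comm]

lemma cross3_apply (u v : E3) :
    cross3 u v 0 = u 1 * v 2 - u 2 * v 1 ∧ cross3 u v 1 = u 2 * v 0 - u 0 * v 2 ∧
      cross3 u v 2 = u 0 * v 1 - u 1 * v 0 := by
  refine ⟨?_, ?_, ?_⟩ <;> simp [cross3]

lemma det3_eq_inner_cross (u v w : E3) : det3 u v w = ⟪cross3 u v, w⟫ := by
  obtain ⟨h0, h1, h2⟩ := cross3_apply u v
  rw [inner3, h0, h1, h2, det3]; ring

lemma e3_smul (c : ℝ) (x : E3) (i : Fin 3) : (c • x) i = c * x i := rfl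
lemma e3_add (x y : E3) (i : Fin 3) : (x + y) i = x i + y i := rfl
lemma e3_sub (x y : E3) (i : Fin 3) : (x - y) i = x i - y i := rfl
lemma e3_neg (x : E3) (i : Fin 3) : (-x) i = -(x i) := rfl

lemma e3_ext {x y : E3} (h0 : x 0 = y 0) (h1 : x 1 = y 1) (h2 : x 2 = y 2) : x = y := by
  ext i
  fin_cases i <;> assumption

/-- triple product: u × (u × v) = ⟪u,v⟫ u - ⟪u,u⟫ v -/
lemma cross3_cross3 (u v : E3) :
    cross3 u (cross3 u v) = ⟪u, v⟫ • u - ⟪u, u⟫ • v := by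
  obtain ⟨h0, h1, h2⟩ := cross3_apply u v
  apply e3_ext <;>
    simp only [cross3_apply u _ |>.1, cross3_apply u _ |>.2.1, cross3_apply u _ |>.2.2,
      e3_sub, e3_smul, h0, h1, h2, inner3] <;> ring

lemma cross3_smul_left (c : ℝ) (u v : E3) : cross3 (c • u) v = c • cross3 u v := by
  apply e3_ext <;>
    simp only [cross3_apply _ _ |>.1, cross3_apply _ _ |>.2.1, cross3_apply _ _ |>.2.2,
      e3_smul] <;> ring

lemma cross3_add_left (u w v : E3) : cross3 (u + w) v = cross3 u v + cross3 w v := by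
  apply e3_ext <;>
    simp only [cross3_apply _ _ |>.1, cross3_apply _ _ |>.2.1, cross3_apply _ _ |>.2.2,
      e3_add] <;> ring

lemma cross3_smul_right (c : ℝ) (u v : E3) : cross3 u (c • v) = c • cross3 u v := by
  apply e3_ext <;>
    simp only [cross3_apply _ _ |>.1, cross3_apply _ _ |>.2.1, cross3_apply _ _ |>.2.2,
      e3_smul] <;> ring

lemma cross3_add_right (u v w : E3) : cross3 u (v + w) = cross3 u v + cross3 u w := by
  apply e3_ext <;>
    simp only [cross3_apply _ _ |>.1, cross3_apply _ _ |>.2.1, cross3_apply _ _ |>.2.2,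
      e3_add] <;> ring

lemma cross3_self (u : E3) : cross3 u u = 0 := by
  apply e3_ext <;>
    simp only [cross3_apply _ _ |>.1, cross3_apply _ _ |>.2.1, cross3_apply _ _ |>.2.2] <;>
    simp <;> ring

lemma inner_cross3_left (u v : E3) : ⟪u, cross3 u v⟫ = 0 := by
  obtain ⟨h0, h1, h2⟩ := cross3_apply u v
  rw [inner3, h0, h1, h2]; ring

lemma inner_cross3_right (u v : E3) : ⟪v, cross3 u v⟫ = 0 := by
  obtain ⟨h0, h1, h2⟩ := cross3_apply u v
  rw [inner3, h0, h1, h2]; ring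

/-- expansion in the orthonormal frame T, N, T×N -/
lemma frame_expand {T N : E3} (cTT : ⟪T, T⟫ = 1) (cNN : ⟪N, N⟫ = 1) (cTN : ⟪T, N⟫ = 0)
    (v : E3) :
    v = ⟪v, T⟫ • T + ⟪v, N⟫ • N + ⟪v, cross3 T N⟫ • cross3 T N := by
  obtain ⟨h0, h1, h2⟩ := cross3_apply T N
  rw [inner3 T T] at cTT; rw [inner3 N N] at cNN; rw [inner3 T N] at cTN
  apply e3_ext <;>
    simp only [e3_add, e3_smul, h0, h1, h2, inner3] <;>
    [(linear_combination (-(N 0 * N 0 + N 1 * N 1 + N 2 * N 2) * v 0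
        + (v 0 * N 0 + v 1 * N 1 + v 2 * N 2) * N 0) * cTT
      + (-(v 0) + (v 0 * T 0 + v 1 * T 1 + v 2 * T 2) * T 0) * cNN
      + ((T 0 * N 0 + T 1 * N 1 + T 2 * N 2) * v 0
        - (v 0 * N 0 + v 1 * N 1 + v 2 * N 2) * T 0
        - (v 0 * T 0 + v 1 * T 1 + v 2 * T 2) * N 0) * cTN);
     (linear_combination (-(N 0 * N 0 + N 1 * N 1 + N 2 * N 2) * v 1
        + (v 0 * N 0 + v 1 * N 1 + v 2 * N 2) * N 1) * cTT
      + (-(v 1) + (v 0 * T 0 + v 1 * T 1 + v 2 * T 2) * T 1) * cNN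
      + ((T 0 * N 0 + T 1 * N 1 + T 2 * N 2) * v 1
        - (v 0 * N 0 + v 1 * N 1 + v 2 * N 2) * T 1
        - (v 0 * T 0 + v 1 * T 1 + v 2 * T 2) * N 1) * cTN);
     (linear_combination (-(N 0 * N 0 + N 1 * N 1 + N 2 * N 2) * v 2
        + (v 0 * N 0 + v 1 * N 1 + v 2 * N 2) * N 2) * cTT
      + (-(v 2) + (v 0 * T 0 + v 1 * T 1 + v 2 * T 2) * T 2) * cNN
      + ((T 0 * N 0 + T 1 * N 1 + T 2 * N 2) * v 2
        - (v 0 * N 0 + v 1 * N 1 + v 2 * N 2) * T 2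
        - (v 0 * T 0 + v 1 * T 1 + v 2 * T 2) * N 2) * cTN)]

lemma hasDerivAt_e3 {f : ℝ → E3} {f' : E3} {t : ℝ} :
    HasDerivAt f f' t ↔ ∀ i, HasDerivAt (fun s => f s i) (f' i) t := by
  constructor
  · intro h i
    exact ((PiLp.proj 2 (fun _ : Fin 3 => ℝ) i).hasFDerivAt.comp_hasDerivAt t h :)
  · intro h
    have e := PiLp.continuousLinearEquiv 2 ℝ (fun _ : Fin 3 => ℝ)
    have h2 : HasDerivAt (fun s => (fun i => f s i : Fin 3 → ℝ)) (fun i => f' i) t :=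
      hasDerivAt_pi.mpr h
    exact ((PiLp.continuousLinearEquiv 2 ℝ (fun _ : Fin 3 => ℝ)).symm.toContinuousLinearMap.hasFDerivAt.comp_hasDerivAt t h2 :)

lemma cross3_zero_def (u v : E3) : cross3 u v 0 = u 1 * v 2 - u 2 * v 1 := rfl

lemma hasDerivAt_cross {f g : ℝ → E3} {f' g' : E3} {t : ℝ}
    (hf : HasDerivAt f f' t) (hg : HasDerivAt g g' t) :
    HasDerivAt (fun s => cross3 (f s) (g s)) (cross3 f' (g t) + cross3 (f t) g') t := by
  rw [hasDerivAt_e3] at hf hg ⊢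
  intro i
  have k0 : HasDerivAt (fun s => cross3 (f s) (g s) 0)
      ((cross3 f' (g t) + cross3 (f t) g') 0) t := by
    simp only [(cross3_apply _ _).1, e3_add]
    exact ((((hf 1).mul (hg 2)).sub ((hf 2).mul (hg 1)))).congr_deriv (by ring)
  have k1 : HasDerivAt (fun s => cross3 (f s) (g s) 1)
      ((cross3 f' (g t) + cross3 (f t) g') 1) t := by
    simp only [(cross3_apply _ _).2.1, e3_add]
    exact ((((hf 2).mul (hg 0)).sub ((hf 0).mul (hg 2)))).congr_deriv (by ring)
  have k2 : HasDerivAt (fun s => cross3 (f s) (g s) 2)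
      ((cross3 f' (g t) + cross3 (f t) g') 2) t := by
    simp only [(cross3_apply _ _).2.2, e3_add]
    exact ((((hf 0).mul (hg 1)).sub ((hf 1).mul (hg 0)))).congr_deriv (by ring)
  fin_cases i
  exacts [k0, k1, k2]

lemma pos_of_monoIco {f : ℝ → ℝ} {c b : ℝ} (hf : Continuous f)
    (hd : ∀ x ∈ Set.Ioo c b, 0 < deriv f x) (h0 : f c = 0) :
    ∀ x ∈ Set.Ioo c b, 0 < f x := by
  intro x hx
  have hm : StrictMonoOn f (Set.Ico c b) :=
    strictMonoOn_of_deriv_pos (convex_Ico c b) hf.continuousOn (by rwa [interior_Ico])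
  have := hm ⟨le_rfl, hx.1.trans hx.2⟩ ⟨hx.1.le, hx.2⟩ hx.1
  linarith

lemma neg_of_monoIoc {f : ℝ → ℝ} {c b : ℝ} (hf : Continuous f)
    (hd : ∀ x ∈ Set.Ioo c b, 0 < deriv f x) (h0 : f b = 0) :
    ∀ x ∈ Set.Ioo c b, f x < 0 := by
  intro x hx
  have hm : StrictMonoOn f (Set.Ioc c b) :=
    strictMonoOn_of_deriv_pos (convex_Ioc c b) hf.continuousOn (by rwa [interior_Ioc])
  have := hm ⟨hx.1, hx.2.le⟩ ⟨hx.1.trans hx.2, le_rfl⟩ hx.2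
  linarith

lemma pos_of_antiIoc {f : ℝ → ℝ} {c b : ℝ} (hf : Continuous f)
    (hd : ∀ x ∈ Set.Ioo c b, deriv f x < 0) (h0 : f b = 0) :
    ∀ x ∈ Set.Ioo c b, 0 < f x := by
  intro x hx
  have hm : StrictAntiOn f (Set.Ioc c b) :=
    strictAntiOn_of_deriv_neg (convex_Ioc c b) hf.continuousOn (by rwa [interior_Ioc])
  have := hm ⟨hx.1, hx.2.le⟩ ⟨hx.1.trans hx.2, le_rfl⟩ hx.2
  linarith
set_option maxHeartbeats 2000000 in
theorem stmt_10
    (ξ : ℝ → EuclideanSpace ℝ (Fin 3))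
    (hξ : ContDiff ℝ (⊤ : ℕ∞) ξ)
    (hunit : ∀ t, ‖deriv ξ t‖ = 1)
    (k τ r : ℝ → ℝ) (N B : ℝ → EuclideanSpace ℝ (Fin 3))
    (hk : ∀ t, k t = ‖deriv (deriv ξ) t‖)
    (hkpos : ∀ t, 0 < k t)
    (hN : ∀ t, N t = (k t)⁻¹ • deriv (deriv ξ) t)
    (hB : ∀ t, B t = cross3 (deriv ξ t) (N t))
    (hτ : ∀ t, τ t = det3 (deriv ξ t) (deriv (deriv ξ) t) (deriv (deriv (deriv ξ)) t) / (k t) ^ 2)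
    (hτne : ∀ t, τ t ≠ 0)
    (hr : ∀ t, r t = (k t)⁻¹)
    (t₀ : ℝ) :
    ∃ ε > 0, ∀ t, 0 < |t - t₀| → |t - t₀| < ε →
      Disjoint
        {P : EuclideanSpace ℝ (Fin 3) |
          ⟪P - ξ t₀, B t₀⟫ = 0 ∧ ‖P - (ξ t₀ + r t₀ • N t₀)‖ = r t₀}
        {P : EuclideanSpace ℝ (Fin 3) | ⟪P - ξ t, B t⟫ = 0} := by
  have hone : (1 : WithTop ℕ∞) ≤ (⊤ : ℕ∞) := by
    exact_mod_cast le_top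
  have hsm : ContDiff ℝ ((⊤ : ℕ∞) : WithTop ℕ∞) ξ := hξ.of_le (by simp)
  set T : ℝ → E3 := deriv ξ with hTdef
  have cT : ContDiff ℝ ((⊤ : ℕ∞) : WithTop ℕ∞) T := (contDiff_infty_iff_deriv.mp hsm).2
  set T2 : ℝ → E3 := deriv T with hT2def
  have cT2 : ContDiff ℝ ((⊤ : ℕ∞) : WithTop ℕ∞) T2 := (contDiff_infty_iff_deriv.mp cT).2
  set T3 : ℝ → E3 := deriv T2 with hT3def
  have cT3 : ContDiff ℝ ((⊤ : ℕ∞) : WithTop ℕ∞) T3 := (contDiff_infty_iff_deriv.mp cT2).2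
  have kne : ∀ t, k t ≠ 0 := fun t => (hkpos t).ne'
  have hT2ne : ∀ t, T2 t ≠ 0 := by
    intro t h
    have h2 := hk t
    rw [h, norm_zero] at h2
    exact kne t h2
  have ck : ContDiff ℝ ((⊤ : ℕ∞) : WithTop ℕ∞) k := by
    have h2 : k = fun t => ‖T2 t‖ := funext hk
    rw [h2]; exact cT2.norm ℝ hT2ne
  have cN : ContDiff ℝ ((⊤ : ℕ∞) : WithTop ℕ∞) N := by
    have h2 : N = fun t => (k t)⁻¹ • T2 t := funext hN
    rw [h2]; exact (ck.inv kne).smul cT2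
  have dξ : ∀ t, HasDerivAt ξ (T t) t := fun t => ((hsm.differentiable (zero_lt_one.trans_le hone).ne') t).hasDerivAt
  have hkN : ∀ t, T2 t = k t • N t := by
    intro t
    rw [hN, smul_smul, mul_inv_cancel₀ (kne t), one_smul]
  have dT : ∀ t, HasDerivAt T (k t • N t) t := by
    intro t
    have := ((cT.differentiable (zero_lt_one.trans_le hone).ne') t).hasDerivAt
    rwa [← hT2def, hkN t] at this
  have fTT : ∀ t, ⟪T t, T t⟫ = 1 := by
    intro t
    rw [real_inner_self_eq_norm_mul_norm, hunit t, mul_one]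
  have fTN : ∀ t, ⟪T t, N t⟫ = 0 := by
    intro t
    have hconst : (fun s => ⟪T s, T s⟫) = fun _ => (1:ℝ) := funext fTT
    have d1 : HasDerivAt (fun s => ⟪T s, T s⟫) (⟪T t, k t • N t⟫ + ⟪k t • N t, T t⟫) t :=
      (dT t).inner ℝ (dT t)
    rw [hconst] at d1
    have h0 := d1.unique (hasDerivAt_const t 1)
    rw [real_inner_smul_right, real_inner_smul_left, real_inner_comm (N t) (T t)] at h0
    have h2 : k t * ⟪N t, T t⟫ = 0 := by linarith
    rcases mul_eq_zero.mp h2 with h | h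
    · exact absurd h (kne t)
    · rw [real_inner_comm]; exact h
  have fNN : ∀ t, ⟪N t, N t⟫ = 1 := by
    intro t
    have hNnorm : ‖N t‖ = 1 := by
      rw [hN, norm_smul, norm_inv, Real.norm_eq_abs, abs_of_pos (hkpos t), ← hk t,
        inv_mul_cancel₀ (kne t)]
    rw [real_inner_self_eq_norm_mul_norm, hNnorm, mul_one]
  have cB : ContDiff ℝ ((⊤ : ℕ∞) : WithTop ℕ∞) B := by
    have hBf : B = fun t => cross3 (T t) (N t) := funext hB
    rw [hBf, contDiff_euclidean]
    intro i
    have cTi : ∀ j, ContDiff ℝ ((⊤ : ℕ∞) : WithTop ℕ∞) (fun t => T t j) :=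
      fun j => contDiff_euclidean.mp cT j
    have cNi : ∀ j, ContDiff ℝ ((⊤ : ℕ∞) : WithTop ℕ∞) (fun t => N t j) :=
      fun j => contDiff_euclidean.mp cN j
    fin_cases i
    · exact ((cTi 1).mul (cNi 2)).sub ((cTi 2).mul (cNi 1))
    · exact ((cTi 2).mul (cNi 0)).sub ((cTi 0).mul (cNi 2))
    · exact ((cTi 0).mul (cNi 1)).sub ((cTi 1).mul (cNi 0))
  have cτ : ContDiff ℝ ((⊤ : ℕ∞) : WithTop ℕ∞) τ := by
    have hτf : τ = fun t => det3 (T t) (T2 t) (T3 t) / k t ^ 2 := funext hτ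
    rw [hτf]
    have cTi := fun j => contDiff_euclidean.mp cT j
    have cT2i := fun j => contDiff_euclidean.mp cT2 j
    have cT3i := fun j => contDiff_euclidean.mp cT3 j
    exact ContDiff.div
      ((((cTi 0).mul (((cT2i 1).mul (cT3i 2)).sub ((cT2i 2).mul (cT3i 1)))).sub
        ((cTi 1).mul (((cT2i 0).mul (cT3i 2)).sub ((cT2i 2).mul (cT3i 0))))).add
        ((cTi 2).mul (((cT2i 0).mul (cT3i 1)).sub ((cT2i 1).mul (cT3i 0)))))
      (ck.pow 2) (fun t => pow_ne_zero 2 (kne t))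
  have dNraw : ∀ t, HasDerivAt N (deriv N t) t := fun t => ((cN.differentiable (zero_lt_one.trans_le hone).ne') t).hasDerivAt
  have dk : ∀ t, HasDerivAt k (deriv k t) t := fun t => ((ck.differentiable (zero_lt_one.trans_le hone).ne') t).hasDerivAt
  have tauval : ∀ t, τ t = ⟪B t, deriv N t⟫ := by
    intro t
    have hT3v : T3 t = k t • deriv N t + deriv k t • N t := by
      have hdT2 : HasDerivAt T2 (k t • deriv N t + deriv k t • N t) t := by
        have h2 : T2 = fun s => k s • N s := funext hkN
        rw [h2]
        exact (dk t).smul (dNraw t)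
      rw [hT3def]
      exact hdT2.deriv
    rw [hτ t, hT3v, hkN t, hB, ← det3_eq_inner_cross]
    rw [div_eq_iff (pow_ne_zero 2 (kne t))]
    simp only [det3, e3_smul, e3_add]
    ring
  have dN : ∀ t, HasDerivAt N (-(k t) • T t + τ t • B t) t := by
    intro t
    have hexp := frame_expand (fTT t) (fNN t) (fTN t) (deriv N t)
    rw [← hB t] at hexp
    have hNT : ⟪deriv N t, T t⟫ = -(k t) := by
      have hconst : (fun s => ⟪N s, T s⟫) = fun _ => (0:ℝ) :=
        funext (fun s => by rw [real_inner_comm]; exact fTN s)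
      have d1 : HasDerivAt (fun s => ⟪N s, T s⟫) (⟪N t, k t • N t⟫ + ⟪deriv N t, T t⟫) t :=
        (dNraw t).inner ℝ (dT t)
      rw [hconst] at d1
      have h0 := d1.unique (hasDerivAt_const t 0)
      rw [real_inner_smul_right, fNN t, mul_one] at h0
      linarith
    have hNN' : ⟪deriv N t, N t⟫ = 0 := by
      have hconst : (fun s => ⟪N s, N s⟫) = fun _ => (1:ℝ) := funext fNN
      have d1 : HasDerivAt (fun s => ⟪N s, N s⟫) (⟪N t, deriv N t⟫ + ⟪deriv N t, N t⟫) t :=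
        (dNraw t).inner ℝ (dNraw t)
      rw [hconst] at d1
      have h0 := d1.unique (hasDerivAt_const t 1)
      have hc := real_inner_comm (N t) (deriv N t)
      linarith
    have hNB : ⟪deriv N t, B t⟫ = τ t := by rw [tauval t, real_inner_comm]
    rw [hNT, hNN', hNB, zero_smul, add_zero] at hexp
    have := dNraw t
    rwa [hexp] at this
  have dB : ∀ t, HasDerivAt B (-(τ t) • N t) t := by
    intro t
    have hBf : B = fun s => cross3 (T s) (N s) := funext hB
    have hd := hasDerivAt_cross (dT t) (dN t)
    rw [← hBf] at hd
    refine hd.congr_deriv ?_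
    rw [cross3_smul_left, cross3_self, smul_zero, cross3_add_right, cross3_smul_right,
      cross3_smul_right, cross3_self, smul_zero, hB t, cross3_cross3, fTN t, fTT t]
    simp only [zero_smul, one_smul, smul_zero, zero_add, zero_sub, smul_neg]
    module
  -- scalar state functions
  set r₀ : ℝ := r t₀ with hr₀def
  have hr₀ : r₀ = (k t₀)⁻¹ := hr t₀
  have hr₀pos : 0 < r₀ := by rw [hr₀]; exact inv_pos.mpr (hkpos t₀)
  have hrk : k t₀ * r₀ = 1 := by rw [hr₀, mul_inv_cancel₀ (kne t₀)]
  set C : E3 := ξ t₀ + r₀ • N t₀ with hCdef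
  have hCsub : C - ξ t₀ = r₀ • N t₀ := by rw [hCdef]; exact add_sub_cancel_left _ _
  have dCs : ∀ t, HasDerivAt (fun s => C - ξ s) (-(T t)) t := fun t =>
    ((hasDerivAt_const t C).sub (dξ t)).congr_deriv (zero_sub _)
  have hTB : ∀ t, ⟪T t, B t⟫ = 0 := fun t => by rw [hB]; exact inner_cross3_left _ _
  have hNB : ∀ t, ⟪N t, B t⟫ = 0 := fun t => by rw [hB]; exact inner_cross3_right _ _
  set Q : ℝ → ℝ := fun t => ⟪C - ξ t, T t⟫ with hQ
  set Pf : ℝ → ℝ := fun t => ⟪C - ξ t, N t⟫ with hPf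
  set G : ℝ → ℝ := fun t => ⟪C - ξ t, B t⟫ with hG
  set uf : ℝ → ℝ := fun t => ⟪T t₀, T t⟫ with huf
  set vf : ℝ → ℝ := fun t => ⟪T t₀, N t⟫ with hvf
  set af : ℝ → ℝ := fun t => ⟪T t₀, B t⟫ with haf
  set wf : ℝ → ℝ := fun t => ⟪N t₀, T t⟫ with hwf
  set xf : ℝ → ℝ := fun t => ⟪N t₀, N t⟫ with hxf
  set bf : ℝ → ℝ := fun t => ⟪N t₀, B t⟫ with hbf
  -- smoothness
  have cCs : ContDiff ℝ ((⊤ : ℕ∞) : WithTop ℕ∞) (fun s => C - ξ s) := contDiff_const.sub hsm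
  have cQ : ContDiff ℝ ((⊤ : ℕ∞) : WithTop ℕ∞) Q := by rw [hQ]; exact cCs.inner ℝ cT
  have cPf : ContDiff ℝ ((⊤ : ℕ∞) : WithTop ℕ∞) Pf := by rw [hPf]; exact cCs.inner ℝ cN
  have cG : ContDiff ℝ ((⊤ : ℕ∞) : WithTop ℕ∞) G := by rw [hG]; exact cCs.inner ℝ cB
  have cuf : ContDiff ℝ ((⊤ : ℕ∞) : WithTop ℕ∞) uf := by rw [huf]; exact contDiff_const.inner ℝ cT
  have cvf : ContDiff ℝ ((⊤ : ℕ∞) : WithTop ℕ∞) vf := by rw [hvf]; exact contDiff_const.inner ℝ cN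
  have caf : ContDiff ℝ ((⊤ : ℕ∞) : WithTop ℕ∞) af := by rw [haf]; exact contDiff_const.inner ℝ cB
  have cwf : ContDiff ℝ ((⊤ : ℕ∞) : WithTop ℕ∞) wf := by rw [hwf]; exact contDiff_const.inner ℝ cT
  have cxf : ContDiff ℝ ((⊤ : ℕ∞) : WithTop ℕ∞) xf := by rw [hxf]; exact contDiff_const.inner ℝ cN
  have cbf : ContDiff ℝ ((⊤ : ℕ∞) : WithTop ℕ∞) bf := by rw [hbf]; exact contDiff_const.inner ℝ cB
  -- derivatives of state functions
  have dQ : ∀ t, HasDerivAt Q (-1 + k t * Pf t) t := by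
    intro t
    simp only [hQ, hPf]
    exact ((dCs t).inner ℝ (dT t)).congr_deriv
      (by rw [real_inner_smul_right, inner_neg_left, fTT t]; ring)
  have dPf : ∀ t, HasDerivAt Pf (-(k t) * Q t + τ t * G t) t := by
    intro t
    simp only [hPf, hQ, hG]
    exact ((dCs t).inner ℝ (dN t)).congr_deriv
      (by rw [inner_add_right, real_inner_smul_right, real_inner_smul_right, inner_neg_left,
        fTN t]; ring)
  have dG : ∀ t, HasDerivAt G (-(τ t) * Pf t) t := by
    intro t
    simp only [hG, hPf]
    exact ((dCs t).inner ℝ (dB t)).congr_deriv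
      (by rw [real_inner_smul_right, inner_neg_left, hTB t]; ring)
  have duf : ∀ t, HasDerivAt uf (k t * vf t) t := by
    intro t
    simp only [huf, hvf]
    exact ((hasDerivAt_const t (T t₀)).inner ℝ (dT t)).congr_deriv
      (by rw [real_inner_smul_right, inner_zero_left]; ring)
  have dvf : ∀ t, HasDerivAt vf (-(k t) * uf t + τ t * af t) t := by
    intro t
    simp only [hvf, huf, haf]
    exact ((hasDerivAt_const t (T t₀)).inner ℝ (dN t)).congr_deriv
      (by rw [inner_add_right, real_inner_smul_right, real_inner_smul_right, inner_zero_left]; ring)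
  have daf : ∀ t, HasDerivAt af (-(τ t) * vf t) t := by
    intro t
    simp only [haf, hvf]
    exact ((hasDerivAt_const t (T t₀)).inner ℝ (dB t)).congr_deriv
      (by rw [real_inner_smul_right, inner_zero_left]; ring)
  have dwf : ∀ t, HasDerivAt wf (k t * xf t) t := by
    intro t
    simp only [hwf, hxf]
    exact ((hasDerivAt_const t (N t₀)).inner ℝ (dT t)).congr_deriv
      (by rw [real_inner_smul_right, inner_zero_left]; ring)
  have dxf : ∀ t, HasDerivAt xf (-(k t) * wf t + τ t * bf t) t := by
    intro t
    simp only [hxf, hwf, hbf]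
    exact ((hasDerivAt_const t (N t₀)).inner ℝ (dN t)).congr_deriv
      (by rw [inner_add_right, real_inner_smul_right, real_inner_smul_right, inner_zero_left]; ring)
  have dbf : ∀ t, HasDerivAt bf (-(τ t) * xf t) t := by
    intro t
    simp only [hbf, hxf]
    exact ((hasDerivAt_const t (N t₀)).inner ℝ (dB t)).congr_deriv
      (by rw [real_inner_smul_right, inner_zero_left]; ring)
  -- values at t₀
  have vQ : Q t₀ = 0 := by
    simp only [hQ, hCsub, real_inner_smul_left]
    rw [real_inner_comm, fTN t₀, mul_zero]
  have vP : Pf t₀ = r₀ := by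
    simp only [hPf, hCsub, real_inner_smul_left]
    rw [fNN t₀, mul_one]
  have vG : G t₀ = 0 := by
    simp only [hG, hCsub, real_inner_smul_left]
    rw [hNB t₀, mul_zero]
  have vu : uf t₀ = 1 := by simp only [huf]; exact fTT t₀
  have vv : vf t₀ = 0 := by simp only [hvf]; exact fTN t₀
  have va : af t₀ = 0 := by simp only [haf]; exact hTB t₀
  have vw : wf t₀ = 0 := by simp only [hwf]; rw [real_inner_comm]; exact fTN t₀
  have vx : xf t₀ = 1 := by simp only [hxf]; exact fNN t₀
  have vb : bf t₀ = 0 := by simp only [hbf]; exact hNB t₀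
  -- combined functions
  set F : ℝ → ℝ := fun t => G t^2 - r₀^2*(af t^2 + bf t^2) with hF
  set H1 : ℝ → ℝ := fun t => G t*Pf t - r₀^2*(af t*vf t + bf t*xf t) with hH1
  set H2 : ℝ → ℝ := fun t => Pf t^2 - r₀^2*(vf t^2 + xf t^2) with hH2
  set H3 : ℝ → ℝ := fun t => G t*Q t - r₀^2*(af t*uf t + bf t*wf t) with hH3
  set H4 : ℝ → ℝ := fun t => Pf t*Q t - r₀^2*(uf t*vf t + wf t*xf t) with hH4
  set H5 : ℝ → ℝ := fun t => Q t^2 - r₀^2*(uf t^2 + wf t^2) with hH5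
  have cF : ContDiff ℝ ((⊤ : ℕ∞) : WithTop ℕ∞) F := by
    rw [hF]; exact (cG.pow 2).sub (contDiff_const.mul ((caf.pow 2).add (cbf.pow 2)))
  have cH1 : ContDiff ℝ ((⊤ : ℕ∞) : WithTop ℕ∞) H1 := by
    rw [hH1]; exact (cG.mul cPf).sub (contDiff_const.mul ((caf.mul cvf).add (cbf.mul cxf)))
  have cH2 : ContDiff ℝ ((⊤ : ℕ∞) : WithTop ℕ∞) H2 := by
    rw [hH2]; exact (cPf.pow 2).sub (contDiff_const.mul ((cvf.pow 2).add (cxf.pow 2)))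
  have cH3 : ContDiff ℝ ((⊤ : ℕ∞) : WithTop ℕ∞) H3 := by
    rw [hH3]; exact (cG.mul cQ).sub (contDiff_const.mul ((caf.mul cuf).add (cbf.mul cwf)))
  have cH4 : ContDiff ℝ ((⊤ : ℕ∞) : WithTop ℕ∞) H4 := by
    rw [hH4]; exact (cPf.mul cQ).sub (contDiff_const.mul ((cuf.mul cvf).add (cwf.mul cxf)))
  have cH5 : ContDiff ℝ ((⊤ : ℕ∞) : WithTop ℕ∞) H5 := by
    rw [hH5]; exact (cQ.pow 2).sub (contDiff_const.mul ((cuf.pow 2).add (cwf.pow 2)))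
  have dF : ∀ t, HasDerivAt F (-2*τ t*H1 t) t := by
    intro t
    simp only [hF]
    have := ((dG t).pow 2).sub ((hasDerivAt_const t (r₀^2)).mul
      (((daf t).pow 2).add ((dbf t).pow 2)))
    exact this.congr_deriv (by simp only [hH1]; ring)
  have dH1 : ∀ t, HasDerivAt H1 (-(τ t)*H2 t + τ t*F t - k t*H3 t) t := by
    intro t
    simp only [hH1]
    have := ((dG t).mul (dPf t)).sub ((hasDerivAt_const t (r₀^2)).mul
      ((((daf t).mul (dvf t)).add ((dbf t).mul (dxf t)))))
    exact this.congr_deriv (by simp only [hH2, hF, hH3]; ring)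
  have dH2 : ∀ t, HasDerivAt H2 (-2*k t*H4 t + 2*τ t*H1 t) t := by
    intro t
    simp only [hH2]
    have := ((dPf t).pow 2).sub ((hasDerivAt_const t (r₀^2)).mul
      (((dvf t).pow 2).add ((dxf t).pow 2)))
    exact this.congr_deriv (by simp only [hH4, hH1]; ring)
  have dH3 : ∀ t, HasDerivAt H3 (-(τ t)*H4 t + k t*H1 t - G t) t := by
    intro t
    simp only [hH3]
    have := ((dG t).mul (dQ t)).sub ((hasDerivAt_const t (r₀^2)).mul
      ((((daf t).mul (duf t)).add ((dbf t).mul (dwf t)))))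
    exact this.congr_deriv (by simp only [hH4, hH1, hG]; ring)
  have dH4 : ∀ t, HasDerivAt H4 (-(k t)*H5 t + k t*H2 t + τ t*H3 t - Pf t) t := by
    intro t
    simp only [hH4]
    have := ((dPf t).mul (dQ t)).sub ((hasDerivAt_const t (r₀^2)).mul
      ((((duf t).mul (dvf t)).add ((dwf t).mul (dxf t)))))
    exact this.congr_deriv (by simp only [hH5, hH2, hH3, hPf]; ring)
  have dH5 : ∀ t, HasDerivAt H5 (-2*Q t + 2*k t*H4 t) t := by
    intro t
    simp only [hH5]
    have := ((dQ t).pow 2).sub ((hasDerivAt_const t (r₀^2)).mul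
      (((duf t).pow 2).add ((dwf t).pow 2)))
    exact this.congr_deriv (by simp only [hQ, hH4]; ring)
  -- values at t₀
  have vF : F t₀ = 0 := by simp only [hF]; rw [vG, va, vb]; ring
  have vH1 : H1 t₀ = 0 := by simp only [hH1]; rw [vG, vP, va, vv, vb, vx]; ring
  have vH2 : H2 t₀ = 0 := by simp only [hH2]; rw [vP, vv, vx]; ring
  have vH3 : H3 t₀ = 0 := by simp only [hH3]; rw [vG, vQ, va, vu, vb, vw]; ring
  have vH4 : H4 t₀ = 0 := by simp only [hH4]; rw [vP, vQ, vu, vv, vw, vx]; ring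
  have vH5 : H5 t₀ = -r₀^2 := by simp only [hH5]; rw [vQ, vu, vw]; ring
  -- higher chain
  have ck' : ContDiff ℝ ((⊤ : ℕ∞) : WithTop ℕ∞) (deriv k) := (contDiff_infty_iff_deriv.mp ck).2
  have cτ' : ContDiff ℝ ((⊤ : ℕ∞) : WithTop ℕ∞) (deriv τ) := (contDiff_infty_iff_deriv.mp cτ).2
  have cτ'' : ContDiff ℝ ((⊤ : ℕ∞) : WithTop ℕ∞) (deriv (deriv τ)) :=
    (contDiff_infty_iff_deriv.mp cτ').2
  have dτ : ∀ t, HasDerivAt τ (deriv τ t) t := fun t => ((cτ.differentiable (zero_lt_one.trans_le hone).ne') t).hasDerivAt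
  have dτ' : ∀ t, HasDerivAt (deriv τ) (deriv (deriv τ) t) t :=
    fun t => ((cτ'.differentiable (zero_lt_one.trans_le hone).ne') t).hasDerivAt
  have dτ'' : ∀ t, HasDerivAt (deriv (deriv τ)) (deriv (deriv (deriv τ)) t) t :=
    fun t => ((cτ''.differentiable (zero_lt_one.trans_le hone).ne') t).hasDerivAt
  have dk' : ∀ t, HasDerivAt (deriv k) (deriv (deriv k) t) t :=
    fun t => ((ck'.differentiable (zero_lt_one.trans_le hone).ne') t).hasDerivAt
  set W : ℝ → ℝ := fun t => -(τ t)*H2 t + τ t*F t - k t*H3 t with hW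
  have cW : ContDiff ℝ ((⊤ : ℕ∞) : WithTop ℕ∞) W := by
    rw [hW]; exact ((cτ.neg.mul cH2).add (cτ.mul cF)).sub (ck.mul cH3)
  have vW : W t₀ = 0 := by simp only [hW]; rw [vH2, vF, vH3]; ring
  have dH1' : ∀ t, HasDerivAt H1 (W t) t := by
    intro t
    exact (dH1 t).congr_deriv (by rw [hW])
  set W2 : ℝ → ℝ := fun t => -(deriv τ t)*H2 t - τ t*(-2*k t*H4 t + 2*τ t*H1 t)
    + (deriv τ t)*F t + τ t*(-2*τ t*H1 t) - (deriv k t)*H3 t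
    - k t*(-(τ t)*H4 t + k t*H1 t - G t) with hW2
  have cW2 : ContDiff ℝ ((⊤ : ℕ∞) : WithTop ℕ∞) W2 := by
    rw [hW2]
    exact (((((cτ'.neg.mul cH2).sub
      (cτ.mul (((contDiff_const.mul ck).mul cH4).add ((contDiff_const.mul cτ).mul cH1)))).add
      (cτ'.mul cF)).add (cτ.mul ((contDiff_const.mul cτ).mul cH1))).sub (ck'.mul cH3)).sub
      (ck.mul (((cτ.neg.mul cH4).add (ck.mul cH1)).sub cG))
  have vW2 : W2 t₀ = 0 := by
    simp only [hW2]; rw [vH1, vH2, vH3, vH4, vG, vF]; ring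
  have dW : ∀ t, HasDerivAt W (W2 t) t := by
    intro t
    simp only [hW]
    have := ((((dτ t).neg.mul (dH2 t)).add ((dτ t).mul (dF t))).sub ((dk t).mul (dH3 t)))
    exact this.congr_deriv (by simp only [hW2, Pi.neg_apply]; ring)
  set F1 : ℝ → ℝ := fun t => -2*τ t*H1 t with hF1
  have cF1 : ContDiff ℝ ((⊤ : ℕ∞) : WithTop ℕ∞) F1 := by
    rw [hF1]; exact (contDiff_const.mul cτ).mul cH1
  have vF1 : F1 t₀ = 0 := by simp only [hF1]; rw [vH1]; ring
  set F2 : ℝ → ℝ := fun t => -2*(deriv τ t)*H1 t - 2*τ t*W t with hF2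
  have cF2 : ContDiff ℝ ((⊤ : ℕ∞) : WithTop ℕ∞) F2 := by
    rw [hF2]; exact ((contDiff_const.mul cτ').mul cH1).sub ((contDiff_const.mul cτ).mul cW)
  have vF2 : F2 t₀ = 0 := by simp only [hF2]; rw [vH1, vW]; ring
  set F3 : ℝ → ℝ := fun t => -2*(deriv (deriv τ) t)*H1 t - 4*(deriv τ t)*W t - 2*τ t*W2 t
    with hF3
  have cF3 : ContDiff ℝ ((⊤ : ℕ∞) : WithTop ℕ∞) F3 := by
    rw [hF3]
    exact (((contDiff_const.mul cτ'').mul cH1).sub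
      ((contDiff_const.mul cτ').mul cW)).sub ((contDiff_const.mul cτ).mul cW2)
  have vF3 : F3 t₀ = 0 := by simp only [hF3]; rw [vH1, vW, vW2]; ring
  have dF1 : ∀ t, HasDerivAt F1 (F2 t) t := by
    intro t
    simp only [hF1]
    have := ((dτ t).const_mul (-2 : ℝ)).mul (dH1' t)
    exact this.congr_deriv (by simp only [hF2]; ring)
  have dF2 : ∀ t, HasDerivAt F2 (F3 t) t := by
    intro t
    simp only [hF2]
    have := (((dτ' t).const_mul (-2 : ℝ)).mul (dH1' t)).sub
      (((dτ t).const_mul (2 : ℝ)).mul (dW t))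
    exact this.congr_deriv (by simp only [hF3]; ring)
  have eF : deriv F = F1 := funext fun x => by rw [hF1]; exact (dF x).deriv
  have eF1 : deriv F1 = F2 := funext fun x => (dF1 x).deriv
  have eF2 : deriv F2 = F3 := funext fun x => (dF2 x).deriv
  have dW2t : HasDerivAt W2 (-(τ t₀)) t₀ := by
    simp only [hW2]
    have c1 := (dτ' t₀).neg.mul (dH2 t₀)
    have c2 := (dτ t₀).mul ((((dk t₀).const_mul (-2 : ℝ)).mul (dH4 t₀)).add
      (((dτ t₀).const_mul (2 : ℝ)).mul (dH1' t₀)))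
    have c3 := (dτ' t₀).mul (dF t₀)
    have c4 := (dτ t₀).mul (((dτ t₀).const_mul (-2 : ℝ)).mul (dH1' t₀))
    have c5 := (dk' t₀).mul (dH3 t₀)
    have c6 := (dk t₀).mul ((((dτ t₀).neg.mul (dH4 t₀)).add ((dk t₀).mul (dH1' t₀))).sub
      (dG t₀))
    have total := ((((c1.sub c2).add c3).add c4).sub c5).sub c6
    refine total.congr_deriv ?_
    simp only [Pi.neg_apply, Pi.mul_apply, Pi.add_apply, Pi.sub_apply, vQ, vP, vG, vH1, vH2, vH3, vH4, vH5, vW, vF]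
    linear_combination (τ t₀ * (3 * k t₀ * r₀ - 1)) * hrk
  have dF3t : HasDerivAt F3 (2*τ t₀^2) t₀ := by
    simp only [hF3]
    have b1 := ((dτ'' t₀).const_mul (-2 : ℝ)).mul (dH1' t₀)
    have b2 := ((dτ' t₀).const_mul (4 : ℝ)).mul (dW t₀)
    have b3 := ((dτ t₀).const_mul (2 : ℝ)).mul dW2t
    have total := (b1.sub b2).sub b3
    refine total.congr_deriv ?_
    rw [vH1, vW, vW2]
    ring
  -- choose ε by continuity of the fourth derivative
  have hd4pos : 0 < deriv F3 t₀ := by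
    rw [dF3t.deriv]
    have hsq : 0 < τ t₀ ^ 2 := lt_of_le_of_ne (sq_nonneg _) (Ne.symm (pow_ne_zero 2 (hτne t₀)))
    linarith
  have hcont4 : Continuous (deriv F3) := cF3.continuous_deriv hone
  obtain ⟨ε, hε, hball⟩ := Metric.isOpen_iff.mp (isOpen_Ioi.preimage hcont4) t₀ hd4pos
  refine ⟨ε, hε, ?_⟩
  intro t htne htlt
  have hmem : ∀ x ∈ Set.Ioo (t₀ - ε) (t₀ + ε), 0 < deriv F3 x := by
    intro x hx
    have : x ∈ Metric.ball t₀ ε := by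
      rw [Metric.mem_ball, Real.dist_eq, abs_lt]
      exact ⟨by linarith [hx.1], by linarith [hx.2]⟩
    exact hball this
  have hsub_r : Set.Ioo t₀ (t₀+ε) ⊆ Set.Ioo (t₀-ε) (t₀+ε) :=
    Set.Ioo_subset_Ioo (by linarith) le_rfl
  have hsub_l : Set.Ioo (t₀-ε) t₀ ⊆ Set.Ioo (t₀-ε) (t₀+ε) :=
    Set.Ioo_subset_Ioo le_rfl (by linarith)
  have A3r := pos_of_monoIco cF3.continuous (fun x hx => hmem x (hsub_r hx)) vF3
  have A3l := neg_of_monoIoc cF3.continuous (fun x hx => hmem x (hsub_l hx)) vF3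
  have A2r := pos_of_monoIco cF2.continuous (fun x hx => by rw [eF2]; exact A3r x hx) vF2
  have A2l := pos_of_antiIoc cF2.continuous (fun x hx => by rw [eF2]; exact A3l x hx) vF2
  have A1r := pos_of_monoIco cF1.continuous (fun x hx => by rw [eF1]; exact A2r x hx) vF1
  have A1l := neg_of_monoIoc cF1.continuous (fun x hx => by rw [eF1]; exact A2l x hx) vF1
  have A0r := pos_of_monoIco cF.continuous (fun x hx => by rw [eF]; exact A1r x hx) vF
  have A0l := pos_of_antiIoc cF.continuous (fun x hx => by rw [eF]; exact A1l x hx) vF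
  have hFt : 0 < F t := by
    have habs := abs_lt.mp htlt
    rcases lt_trichotomy t t₀ with h | h | h
    · exact A0l t ⟨by linarith [habs.1], h⟩
    · exfalso; rw [h, sub_self, abs_zero] at htne; exact lt_irrefl 0 htne
    · exact A0r t ⟨h, by linarith [habs.2]⟩
  -- geometric conclusion
  rw [Set.disjoint_left]
  intro P hPmem hPmem2
  obtain ⟨hP1, hP2⟩ := hPmem
  have hP3 : ⟪P - ξ t, B t⟫ = 0 := hPmem2
  have hexp := frame_expand (fTT t₀) (fNN t₀) (fTN t₀) (P - C)
  rw [← hB t₀] at hexp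
  have hγ : ⟪P - C, B t₀⟫ = 0 := by
    have hsplit : P - C = (P - ξ t₀) - (C - ξ t₀) := by abel
    rw [hsplit, inner_sub_left, hP1, hCsub, real_inner_smul_left, hNB t₀]
    ring
  rw [hγ, zero_smul, add_zero] at hexp
  set α : ℝ := ⟪P - C, T t₀⟫ with hα
  set β : ℝ := ⟪P - C, N t₀⟫ with hβ
  have hn2 : ⟪P - C, P - C⟫ = r₀^2 := by
    rw [real_inner_self_eq_norm_mul_norm, hP2]
    ring
  have hab : α^2 + β^2 = r₀^2 := by
    rw [← hn2]
    nth_rewrite 2 [hexp]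
    rw [inner_add_right, real_inner_smul_right, real_inner_smul_right, ← hα, ← hβ]
    ring
  have hPB : ⟪P - C, B t⟫ = α * af t + β * bf t := by
    nth_rewrite 1 [hexp]
    rw [inner_add_left, real_inner_smul_left, real_inner_smul_left]
  have hGt : G t = ⟪C - ξ t, B t⟫ := by rw [hG]
  have h0 : G t + (α * af t + β * bf t) = 0 := by
    have hsplit : P - ξ t = (P - C) + (C - ξ t) := by abel
    rw [hsplit, inner_add_left, hPB] at hP3
    rw [hGt]
    linarith
  have hFt' : 0 < G t^2 - r₀^2*(af t^2 + bf t^2) := by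
    have := hFt
    simp only [hF] at this
    exact this
  have e1 : G t = -(α*af t + β*bf t) := by linarith
  have e2 : G t^2 - r₀^2*(af t^2+bf t^2) = -(α*bf t - β*af t)^2 := by
    rw [e1, ← hab]; ring
  rw [e2] at hFt'
  have e3 := sq_nonneg (α*bf t - β*af t)
  linarith
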